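/- Given a 3SAT instance over variables x_1,...,x_n with clauses c_1,...,c_m, consider the Gcc constraint with repeated variables: variables Y_{c_1},...,Y_{c_m} where Y_{c_j} has domain the set of (integer-encoded) literals of clause c_j, and variables Y_{l_1},...,Y_{l_n} each with domain {i,−i} and each repeated m times in the sequence; every value in [−n,−1] ∪ [1,n] may occur at most m times in total. Then this constraint has a satisfying assignment if and only if the 3SAT formula is satisfiable. -/
import Mathlib


/-- Integer encoding of a literal: the positive literal `x_i` (for `i : Fin n`)
is encoded as `i+1`, and its negation as `-(i+1)`. -/
def litVal {n : ℕ} (p : Fin n × Bool) : ℤ :=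
  if p.2 then ((p.1 : ℕ) : ℤ) + 1 else -(((p.1 : ℕ) : ℤ) + 1)

lemma litVal_inj {n : ℕ} {p q : Fin n × Bool} (h : litVal p = litVal q) : p = q := by
  obtain ⟨i, b⟩ := p; obtain ⟨j, c⟩ := q
  cases b <;> cases c <;> simp only [litVal] at h <;>
    simp only [Prod.mk.injEq, Fin.ext_iff, and_true, Bool.false_eq_true, Bool.true_eq_false,
      and_false] <;> simp at h <;> omega

lemma litVal_ne_zero {n : ℕ} (p : Fin n × Bool) : litVal p ≠ 0 := by
  unfold litVal; split <;> omega

lemma litVal_lb {n : ℕ} (p : Fin n × Bool) : -(n:ℤ) ≤ litVal p := by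
  have := p.1.isLt; unfold litVal; split <;> omega

lemma litVal_ub {n : ℕ} (p : Fin n × Bool) : litVal p ≤ n := by
  have := p.1.isLt; unfold litVal; split <;> omega

/-- Gcc with repeated variables: one variable `Yc j` per clause ranging over
its encoded literals, one variable `Yl i` per Boolean variable with domain
`{i, -i}` repeated `m` times in the sequence, and each value in
`[-n,-1] ∪ [1,n]` occurring at most `m` times in total.  This constraint has a
satisfying assignment iff the 3SAT instance is satisfiable. -/
theorem stmt11 (n m : ℕ) (clause : Fin m → Fin 3 → Fin n × Bool) :
    (∃ (Yc : Fin m → ℤ) (Yl : Fin n → ℤ),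
      (∀ j, ∃ k, Yc j = litVal (clause j k)) ∧
      (∀ i, Yl i = litVal (i, true) ∨ Yl i = litVal (i, false)) ∧
      (∀ v : ℤ, v ≠ 0 → -(n : ℤ) ≤ v → v ≤ n →
        (Finset.univ.filter fun j => Yc j = v).card
          + m * (Finset.univ.filter fun i => Yl i = v).card ≤ m)) ↔
    (∃ a : Fin n → Bool, ∀ j, ∃ k, a (clause j k).1 = (clause j k).2) := by
  constructor
  · rintro ⟨Yc, Yl, hYc, hYl, hcard⟩
    rcases Nat.eq_zero_or_pos m with hm | hm
    · subst hm; exact ⟨fun _ => true, fun j => j.elim0⟩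
    refine ⟨fun i => decide (Yl i = litVal (i, false)), fun j => ?_⟩
    obtain ⟨k, hk⟩ := hYc j
    refine ⟨k, ?_⟩
    have hne : Yl (clause j k).1 ≠ litVal (clause j k) := by
      intro h
      have hc := hcard (litVal (clause j k)) (litVal_ne_zero _) (litVal_lb _) (litVal_ub _)
      have h1 : 0 < (Finset.univ.filter fun j' => Yc j' = litVal (clause j k)).card :=
        Finset.card_pos.mpr ⟨j, by simp [hk]⟩
      have h2 : 1 ≤ (Finset.univ.filter fun i => Yl i = litVal (clause j k)).card :=
        Finset.card_pos.mpr ⟨(clause j k).1, by simp [h]⟩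
      have h3 : m * 1 ≤ m * (Finset.univ.filter fun i => Yl i = litVal (clause j k)).card :=
        Nat.mul_le_mul_left _ h2
      omega
    have hv : litVal (clause j k) = litVal ((clause j k).1, (clause j k).2) := by
      rw [Prod.mk.eta]
    cases hb : (clause j k).2
    · rw [hb] at hv
      rw [hv] at hne
      simp only [decide_eq_false_iff_not]
      exact hne
    · rw [hb] at hv
      rw [hv] at hne
      rcases hYl (clause j k).1 with h | h
      · exact absurd h hne
      · simp [h]
  · rintro ⟨a, ha⟩
    choose k hk using ha
    refine ⟨fun j => litVal (clause j (k j)), fun i => litVal (i, !a i),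
      fun j => ⟨k j, rfl⟩, fun i => ?_, ?_⟩
    · cases h : a i <;> simp [h]
    · intro v hv0 hlb hub
      by_cases hE : ∃ i : Fin n, litVal (i, !a i) = v
      · obtain ⟨i, hi⟩ := hE
        have hYl1 : (Finset.univ.filter fun i' => litVal (i', !a i') = v).card = 1 := by
          rw [Finset.card_eq_one]
          refine ⟨i, ?_⟩
          ext i'
          simp only [Finset.mem_filter, Finset.mem_univ, true_and, Finset.mem_singleton]
          constructor
          · intro h
            have := litVal_inj (h.trans hi.symm)
            exact congrArg Prod.fst this
          · rintro rfl; exact hi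
        have hYc0 : (Finset.univ.filter fun j => litVal (clause j (k j)) = v).card = 0 := by
          rw [Finset.card_eq_zero]
          ext j
          simp only [Finset.mem_filter, Finset.mem_univ, true_and, Finset.notMem_empty,
            iff_false]
          intro h
          have heq := litVal_inj (h.trans hi.symm)
          have h1 : (clause j (k j)).1 = i := congrArg Prod.fst heq
          have h2 : (clause j (k j)).2 = !a i := congrArg Prod.snd heq
          have := hk j
          rw [h1, h2] at this
          simp at this
        rw [hYl1, hYc0]
        omega
      · push_neg at hE
        have hYl0 : (Finset.univ.filter fun i' => litVal (i', !a i') = v).card = 0 := by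
          rw [Finset.card_eq_zero]
          ext i'
          simp only [Finset.mem_filter, Finset.mem_univ, true_and, Finset.notMem_empty,
            iff_false]
          exact hE i'
        rw [hYl0]
        have := Finset.card_filter_le Finset.univ (fun j => litVal (clause j (k j)) = v)
        simpa using this
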